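/- arXiv:1210.1484 — 5 statements merged into one kernel-verified Lean document; each statement's English description precedes it below -/
import Mathlib

section
/- Let P be a Markov kernel reversible with respect to a probability measure π on a measurable space X. For any measurable A with π(A) ∈ (0,1), the spectral gap of P satisfies Gap(P) ≤ (1−π(A))^{−1} · sup_{x∈A}(1−ρ(x)), where ρ(x) = P(x,{x}) is the holding probability, i.e., assuming P(x,·) ≥ ρ(x)δ_x(·) on A. Consequently Gap(P) ≤ (1−π(A))^{−1}(1 − inf_{x∈A} ρ(x)). -/
open MeasureTheory ProbabilityTheory

/-- Dirichlet form `E_P(f) = (1/2)∬ π(dx) P(x,dy) (f(x)−f(y))²` (as an `ℝ≥0∞`-valued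
quantity). -/
noncomputable def eDirichlet {X : Type*} [MeasurableSpace X] (π : Measure X)
    (P : Kernel X X) (f : X → ℝ) : ENNReal :=
  (1 / 2) * ∫⁻ x, ∫⁻ y, ENNReal.ofReal ((f x - f y) ^ 2) ∂(P x) ∂π

/-- Variance `Var_π(f) = ∫ (f − π(f))² dπ` (as an `ℝ≥0∞`-valued quantity). -/
noncomputable def eVar {X : Type*} [MeasurableSpace X] (π : Measure X) (f : X → ℝ) :
    ENNReal :=
  ∫⁻ x, ENNReal.ofReal ((f x - ∫ y, f y ∂π) ^ 2) ∂π

/-- Spectral gap `Gap(P) = inf { E_P(f)/Var_π(f) : Var_π(f) > 0 }`. -/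
noncomputable def spectralGap {X : Type*} [MeasurableSpace X] (π : Measure X)
    (P : Kernel X X) : ENNReal :=
  ⨅ (f : X → ℝ) (_ : Measurable f) (_ : eVar π f ≠ 0), eDirichlet π P f / eVar π f

/-- If `P` is reversible w.r.t. `π`, `A` has `π(A) ∈ (0,1)` and the holding
probabilities satisfy `P(x,{x}) ≥ ρ(x)` on `A`, then for any lower bound `c` of `ρ`
on `A`, `Gap(P) ≤ (1 − π(A))⁻¹ (1 − c)`; in other words,
`Gap(P) ≤ (1 − π(A))⁻¹ (1 − inf_{x∈A} ρ(x))`. -/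
theorem stmt_8 {X : Type*} [MeasurableSpace X] [MeasurableSingletonClass X]
    (π : Measure X) [IsProbabilityMeasure π]
    (P : Kernel X X) [IsMarkovKernel P]
    (hrev : ∀ A B : Set X, MeasurableSet A → MeasurableSet B →
      ∫⁻ x in A, P x B ∂π = ∫⁻ x in B, P x A ∂π)
    (A : Set X) (hA : MeasurableSet A) (hA0 : 0 < π A) (hA1 : π A < 1)
    (ρ : X → ℝ) (hρ : ∀ x ∈ A, ENNReal.ofReal (ρ x) ≤ P x {x}) :
    ∀ c : ℝ, (∀ x ∈ A, c ≤ ρ x) →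
      spectralGap π P ≤ (1 - π A)⁻¹ * ENNReal.ofReal (1 - c) := by
  classical
  intro c hc
  set f : X → ℝ := A.indicator 1 with hfdef
  have hf : Measurable f := measurable_one.indicator hA
  have hfA : ∀ x ∈ A, f x = 1 := fun x hx => Set.indicator_of_mem hx 1
  have hfAc : ∀ x ∉ A, f x = 0 := fun x hx => Set.indicator_of_notMem hx 1
  set m : ℝ := (π A).toReal with hmdef
  have hπA : π A ≠ ⊤ := measure_ne_top π A
  have hm0 : 0 ≤ m := ENNReal.toReal_nonneg
  have hm1 : m ≤ 1 := by
    rw [hmdef, ← ENNReal.toReal_one]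
    exact ENNReal.toReal_mono ENNReal.one_ne_top hA1.le
  have hπAm : π A = ENNReal.ofReal m := (ENNReal.ofReal_toReal hπA).symm
  have hπAc : (1 : ENNReal) - π A = ENNReal.ofReal (1 - m) := by
    rw [hπAm, ENNReal.ofReal_sub 1 hm0, ENNReal.ofReal_one]
  have hmean : ∫ y, f y ∂π = m := integral_indicator_one hA
  -- variance computation
  have hVar : eVar π f = π A * (1 - π A) := by
    rw [eVar, hmean, ← lintegral_add_compl (fun x => ENNReal.ofReal ((f x - m) ^ 2)) hA]
    have h1 : ∫⁻ x in A, ENNReal.ofReal ((f x - m) ^ 2) ∂π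
        = ENNReal.ofReal ((1 - m) ^ 2) * π A := by
      rw [setLIntegral_congr_fun hA (fun x hx => by rw [hfA x hx]),
        setLIntegral_const]
    have h2 : ∫⁻ x in Aᶜ, ENNReal.ofReal ((f x - m) ^ 2) ∂π
        = ENNReal.ofReal (m ^ 2) * (1 - π A) := by
      rw [setLIntegral_congr_fun hA.compl
        (fun x hx => show ENNReal.ofReal ((f x - m) ^ 2)
          = ENNReal.ofReal (m ^ 2) by rw [hfAc x hx]; ring_nf),
        setLIntegral_const, prob_compl_eq_one_sub hA]
    rw [h1, h2, hπAc, hπAm, ← ENNReal.ofReal_mul (by positivity),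
      ← ENNReal.ofReal_mul (by positivity), ← ENNReal.ofReal_mul hm0,
      ← ENNReal.ofReal_add (mul_nonneg (by positivity) hm0)
        (mul_nonneg (by positivity) (by linarith))]
    congr 1; ring
  have h1mA0 : (1 : ENNReal) - π A ≠ 0 := fun h => hA1.not_ge (tsub_eq_zero_iff_le.mp h)
  have h1mAtop : (1 : ENNReal) - π A ≠ ⊤ := ENNReal.sub_ne_top ENNReal.one_ne_top
  have hVar0 : eVar π f ≠ 0 := by
    rw [hVar]; exact mul_ne_zero hA0.ne' h1mA0
  have hVartop : eVar π f ≠ ⊤ := by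
    rw [hVar]; exact ENNReal.mul_ne_top hπA h1mAtop
  -- Dirichlet form bound
  have hinner : ∀ x, (∫⁻ y, ENNReal.ofReal ((f x - f y) ^ 2) ∂(P x))
      = if x ∈ A then P x Aᶜ else P x A := by
    intro x
    by_cases hx : x ∈ A
    · rw [if_pos hx, ← lintegral_indicator_one hA.compl]
      refine lintegral_congr fun y => ?_
      by_cases hy : y ∈ A
      · rw [hfA x hx, hfA y hy, Set.indicator_of_notMem (by simpa using hy)]
        norm_num
      · rw [hfA x hx, hfAc y hy, Set.indicator_of_mem (by simpa using hy)]
        simp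
    · rw [if_neg hx, ← lintegral_indicator_one hA]
      refine lintegral_congr fun y => ?_
      by_cases hy : y ∈ A
      · rw [hfAc x hx, hfA y hy, Set.indicator_of_mem hy]
        norm_num
      · rw [hfAc x hx, hfAc y hy, Set.indicator_of_notMem hy]
        norm_num
  have hDir : eDirichlet π P f = ∫⁻ x in A, P x Aᶜ ∂π := by
    rw [eDirichlet]
    have : ∫⁻ x, ∫⁻ y, ENNReal.ofReal ((f x - f y) ^ 2) ∂(P x) ∂π
        = ∫⁻ x in A, P x Aᶜ ∂π + ∫⁻ x in Aᶜ, P x A ∂π := by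
      rw [← lintegral_add_compl (fun x => ∫⁻ y, ENNReal.ofReal ((f x - f y) ^ 2) ∂(P x)) hA]
      congr 1
      · exact setLIntegral_congr_fun hA (fun x hx => by rw [hinner, if_pos hx])
      · exact setLIntegral_congr_fun hA.compl
          (fun x hx => by rw [hinner, if_neg (by simpa using hx)])
    rw [this, hrev Aᶜ A hA.compl hA, ← two_mul, ← mul_assoc, one_div,
      ENNReal.inv_mul_cancel (by norm_num) ENNReal.ofNat_ne_top, one_mul]
  have hDirle : eDirichlet π P f ≤ ENNReal.ofReal (1 - c) * π A := by
    rw [hDir, ← setLIntegral_const A (ENNReal.ofReal (1 - c))]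
    refine setLIntegral_mono measurable_const fun x hx => ?_
    have hdisj : Disjoint Aᶜ ({x} : Set X) := by
      simp [Set.disjoint_singleton_right, hx]
    have hsum : P x Aᶜ + P x {x} ≤ 1 := by
      rw [← measure_union hdisj (measurableSet_singleton x)]
      exact prob_le_one
    have h1 : P x Aᶜ ≤ 1 - P x {x} := ENNReal.le_sub_of_add_le_right (measure_ne_top _ _) hsum
    have h2 : (1 : ENNReal) - P x {x} ≤ 1 - ENNReal.ofReal c := by
      gcongr
      exact (ENNReal.ofReal_le_ofReal (hc x hx)).trans (hρ x hx)
    refine h1.trans (h2.trans ?_)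
    rcases le_or_gt 0 c with h | h
    · rw [ENNReal.ofReal_sub 1 h, ENNReal.ofReal_one]
    · rw [ENNReal.ofReal_of_nonpos h.le, tsub_zero]
      exact ENNReal.one_le_ofReal.mpr (by linarith)
  -- conclusion
  refine le_trans (iInf_le_of_le f (iInf_le_of_le hf (iInf_le _ hVar0))) ?_
  rw [ENNReal.div_le_iff hVar0 hVartop, hVar]
  calc eDirichlet π P f ≤ ENNReal.ofReal (1 - c) * π A := hDirle
    _ = (1 - π A)⁻¹ * ENNReal.ofReal (1 - c) * (π A * (1 - π A)) := by
        rw [mul_comm (π A) (1 - π A), ← mul_assoc, mul_assoc _ (ENNReal.ofReal (1 - c)),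
          mul_comm (ENNReal.ofReal (1 - c)) (1 - π A), ← mul_assoc,
          ENNReal.inv_mul_cancel h1mA0 h1mAtop, one_mul]
end

section
/- Consider the independent Metropolis–Hastings kernel P targeting π with proposal q, where q ≫ π and μ(x) := dπ/dq(x). Suppose there is a strictly increasing φ : (0,∞) → [1,∞) with liminf_{t→∞} φ(t)/t > 0 and ∫ φ(μ(x)) π(dx) < ∞. Then there exist constants M, c ∈ (0,∞) such that with V(x) = φ(μ(x)), one has PV(x) ≤ V(x) − c·V(x)/φ^{−1}(V(x)) whenever μ(x) > M. -/
open MeasureTheory Filter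

/-- Sub-geometric drift for the independent Metropolis–Hastings algorithm: with
`μ = dπ/dq` and `V = φ ∘ μ` for a strictly increasing `φ : (0,∞) → [1,∞)` with
`liminf_{t→∞} φ(t)/t > 0` and `∫ φ(μ(x)) π(dx) < ∞`, there exist `M, c ∈ (0,∞)`
such that `PV(x) ≤ V(x) − c·V(x)/φ⁻¹(V(x))` whenever `μ(x) > M`. Here
`PV(x) = ∫ min{1, μ(y)/μ(x)} V(y) q(dy) + (1 − ∫ min{1, μ(y)/μ(x)} q(dy)) V(x)`
and `ψ` is the inverse of `φ` on `(0,∞)`. -/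
theorem stmt_16 {X : Type*} [MeasurableSpace X]
    (π q : Measure X) [IsProbabilityMeasure π] [IsProbabilityMeasure q]
    (hac : π ≪ q)
    (μf : X → ℝ) (hμmeas : Measurable μf) (hμpos : ∀ x, 0 < μf x)
    (hd : ∀ᵐ x ∂q, ENNReal.ofReal (μf x) = π.rnDeriv q x)
    (φ ψ : ℝ → ℝ) (hφmeas : Measurable φ)
    (hφmono : StrictMonoOn φ (Set.Ioi 0))
    (hφ1 : ∀ t : ℝ, 0 < t → 1 ≤ φ t)
    (hψ : ∀ t : ℝ, 0 < t → ψ (φ t) = t)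
    (hliminf : 0 < liminf (fun t => φ t / t) atTop)
    (hint : Integrable (fun x => φ (μf x)) π) :
    ∃ M c : ℝ, 0 < M ∧ 0 < c ∧ ∀ x : X, M < μf x →
      (∫ y, min 1 (μf y / μf x) * φ (μf y) ∂q)
        + (1 - ∫ y, min 1 (μf y / μf x) ∂q) * φ (μf x)
      ≤ φ (μf x) - c * φ (μf x) / ψ (φ (μf x)) := by
  -- change of measure helper
  have key : ∀ g : X → ℝ, Integrable g π →
      Integrable (fun y => g y * μf y) q ∧ (∫ y, g y * μf y ∂q) = ∫ y, g y ∂π := by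
    intro g hgint
    have hae : (fun y => g y * μf y) =ᵐ[q] fun y => (π.rnDeriv q y).toReal • g y := by
      filter_upwards [hd] with y hy
      rw [← hy, ENNReal.toReal_ofReal (hμpos y).le, smul_eq_mul, mul_comm]
    exact ⟨(Integrable.congr ((MeasureTheory.integrable_rnDeriv_smul_iff hac).mpr hgint) hae.symm),
      by rw [integral_congr_ae hae, MeasureTheory.integral_rnDeriv_smul hac]⟩
  set C := ∫ y, φ (μf y) ∂π with hCdef
  have hC1 : 1 ≤ C := by
    calc (1:ℝ) = ∫ _y, (1:ℝ) ∂π := by simp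
    _ ≤ C := integral_mono (integrable_const 1) hint (fun y => hφ1 _ (hμpos y))
  -- a level set of positive π-measure
  obtain ⟨n0, hn0⟩ : ∃ n : ℕ, π {y | μf y ≤ (n:ℝ)} ≠ 0 := by
    by_contra h
    push_neg at h
    have h2 : π (⋃ n : ℕ, {y | μf y ≤ (n:ℝ)}) = 0 := measure_iUnion_null h
    have h3 : (⋃ n : ℕ, {y | μf y ≤ (n:ℝ)}) = Set.univ := by
      ext y
      simp only [Set.mem_iUnion, Set.mem_univ, iff_true, Set.mem_setOf_eq]
      exact exists_nat_ge (μf y)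
    rw [h3, measure_univ] at h2
    exact one_ne_zero h2
  set S : Set X := {y | μf y ≤ (n0:ℝ)} with hSdef
  have hS : MeasurableSet S := hμmeas measurableSet_Iic
  set p0 : ℝ := (π S).toReal with hp0def
  have hp0 : 0 < p0 := ENNReal.toReal_pos hn0 (measure_ne_top _ _)
  -- linear lower bound for φ eventually
  set δ : ℝ := (liminf (fun t => φ t / t) atTop) / 2 with hδdef
  have hδ : 0 < δ := half_pos hliminf
  have hbdd : IsBoundedUnder (· ≥ ·) (atTop : Filter ℝ) (fun t => φ t / t) := by
    refine ⟨0, ?_⟩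
    rw [Filter.eventually_map]
    filter_upwards [eventually_ge_atTop (1:ℝ)] with t ht
    have h1 : (0:ℝ) < t := lt_of_lt_of_le one_pos ht
    have h2 := hφ1 t h1
    exact div_nonneg (by linarith) h1.le
  have hev : ∀ᶠ t in atTop, δ < φ t / t :=
    eventually_lt_of_lt_liminf (half_lt_self hliminf) hbdd
  obtain ⟨T, hT⟩ := eventually_atTop.mp hev
  -- constants
  refine ⟨max (max ((n0:ℝ) + 1) (T + 1)) (2 * C / (δ * p0) + 1), p0 / 2, ?_, half_pos hp0, ?_⟩
  · exact lt_of_lt_of_le (by positivity) (le_max_of_le_left (le_max_left _ _))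
  intro x hx
  set m := μf x with hmdef
  have hm : 0 < m := hμpos x
  have hmn0 : (n0:ℝ) ≤ m := by
    have := le_max_of_le_left (le_max_left ((n0:ℝ) + 1) (T + 1))
      (c := 2 * C / (δ * p0) + 1)
    linarith [lt_of_le_of_lt this hx]
  have hmT : T ≤ m := by
    have := le_max_of_le_left (le_max_right ((n0:ℝ) + 1) (T + 1))
      (c := 2 * C / (δ * p0) + 1)
    linarith [lt_of_le_of_lt this hx]
  have hmC : 2 * C / (δ * p0) < m := by
    have := le_max_right (max ((n0:ℝ) + 1) (T + 1)) (2 * C / (δ * p0) + 1)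
    linarith [lt_of_le_of_lt this hx]
  have hφm : δ * m ≤ φ m := le_of_lt ((lt_div_iff₀ hm).mp (hT m hmT))
  have hCm : C ≤ p0 / 2 * φ m := by
    have h1 : 2 * C < m * (δ * p0) := (div_lt_iff₀ (by positivity)).mp hmC
    nlinarith [mul_le_mul_of_nonneg_left hφm (le_of_lt (half_pos hp0))]
  have hφpos : 0 < φ m := lt_of_lt_of_le one_pos (hφ1 m hm)
  -- bound the accepted-mass integral from above
  obtain ⟨hint2, heq2⟩ := key (fun y => φ (μf y)) hint
  have hmin_nonneg : ∀ y : X, 0 ≤ min 1 (μf y / m) :=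
    fun y => le_min one_pos.le (div_nonneg (hμpos y).le hm.le)
  have hI1 : (∫ y, min 1 (μf y / m) * φ (μf y) ∂q) ≤ C / m := by
    have hle : ∀ y, min 1 (μf y / m) * φ (μf y) ≤ (φ (μf y) * μf y) / m := by
      intro y
      have hφy : 0 ≤ φ (μf y) := le_of_lt (lt_of_lt_of_le one_pos (hφ1 _ (hμpos y)))
      have h1 := mul_le_mul_of_nonneg_right (min_le_right 1 (μf y / m)) hφy
      have h2 : μf y / m * φ (μf y) = φ (μf y) * μf y / m := by ring
      linarith [h1, h2.le]
    have hintL : Integrable (fun y => min 1 (μf y / m) * φ (μf y)) q := by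
      refine (hint2.div_const m).mono ?_ ?_
      · exact ((measurable_const.min (hμmeas.div_const m)).mul
          (hφmeas.comp hμmeas)).aestronglyMeasurable
      · filter_upwards with y
        have hφy : 0 ≤ φ (μf y) := le_of_lt (lt_of_lt_of_le one_pos (hφ1 _ (hμpos y)))
        rw [Real.norm_eq_abs, Real.norm_eq_abs,
          abs_of_nonneg (mul_nonneg (hmin_nonneg y) hφy),
          abs_of_nonneg (div_nonneg (mul_nonneg hφy (hμpos y).le) hm.le)]
        exact hle y
    calc (∫ y, min 1 (μf y / m) * φ (μf y) ∂q)
        ≤ ∫ y, (φ (μf y) * μf y) / m ∂q := integral_mono hintL (hint2.div_const m) hle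
      _ = C / m := by rw [integral_div, heq2]
  -- bound the acceptance probability from below
  have haint : Integrable (fun y => min 1 (μf y / m)) q := by
    refine (integrable_const (1:ℝ)).mono ?_ ?_
    · exact (measurable_const.min (hμmeas.div_const m)).aestronglyMeasurable
    · filter_upwards with y
      rw [Real.norm_eq_abs, Real.norm_eq_abs, abs_of_nonneg (hmin_nonneg y), abs_one]
      exact min_le_left _ _
  obtain ⟨hi3, he3⟩ := key (S.indicator (fun _ => (1:ℝ))) ((integrable_const 1).indicator hS)
  have he4 : (∫ y, S.indicator (fun _ => (1:ℝ)) y * μf y ∂q) = p0 := by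
    rw [he3, integral_indicator hS]
    simp [hp0def, measureReal_def]
  have ha : p0 / m ≤ ∫ y, min 1 (μf y / m) ∂q := by
    have hle : ∀ y, (S.indicator (fun _ => (1:ℝ)) y * μf y) / m ≤ min 1 (μf y / m) := by
      intro y
      rw [Set.indicator_apply]
      by_cases hy : y ∈ S
      · rw [if_pos hy]
        refine le_min ?_ ?_
        · rw [one_mul]
          exact (div_le_one hm).mpr (le_trans hy hmn0)
        · rw [one_mul]
      · rw [if_neg hy, zero_mul, zero_div]
        exact hmin_nonneg y
    calc p0 / m = ∫ y, (S.indicator (fun _ => (1:ℝ)) y * μf y) / m ∂q := by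
          rw [integral_div, he4]
      _ ≤ ∫ y, min 1 (μf y / m) ∂q := integral_mono (hi3.div_const m) haint hle
  -- conclude
  rw [hψ m hm]
  have h2 : p0 / m * φ m ≤ (∫ y, min 1 (μf y / m) ∂q) * φ m :=
    mul_le_mul_of_nonneg_right ha hφpos.le
  have h4 : C / m ≤ (p0 / 2 * φ m) / m := (div_le_div_iff_of_pos_right hm).mpr hCm
  have hid : p0 / m * φ m = 2 * ((p0 / 2 * φ m) / m) := by field_simp
  have h0 : 0 ≤ C / m := div_nonneg (by linarith) hm.le
  linarith [hI1, h2, h4, hid, h0]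
end

section
/- Under the same setting as the IMH drift lemma, there exist M, ε ∈ (0,∞) and a probability measure ν such that P(x,·) ≥ ε ν(·) for all x with μ(x) ≤ M, and moreover ν(V) < ∞ where V(x) = φ(μ(x)). -/
open MeasureTheory Filter

/-- Minorization for the independent Metropolis–Hastings algorithm: with
`μ = dπ/dq` and `V = φ ∘ μ`, where `φ : (0,∞) → [1,∞)` is strictly increasing with
`liminf φ(t)/t > 0` and `∫ φ(μ(x)) π(dx) < ∞`, there exist `M, ε ∈ (0,∞)` and a
probability measure `ν` such that `P(x,·) ≥ ε ν(·)` for all `x` with `μ(x) ≤ M`,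
and moreover `ν(V) < ∞`. Here the IMH kernel at `x` is
`P(x,dy) = min{1, μ(y)/μ(x)} q(dy) + δ_x(dy) ρ(x)`. -/
theorem stmt_17 {X : Type*} [MeasurableSpace X] [MeasurableSingletonClass X]
    (π q : Measure X) [IsProbabilityMeasure π] [IsProbabilityMeasure q]
    (hac : π ≪ q)
    (μf : X → ℝ) (hμmeas : Measurable μf) (hμpos : ∀ x, 0 < μf x)
    (hd : ∀ᵐ x ∂q, ENNReal.ofReal (μf x) = π.rnDeriv q x)
    (φ : ℝ → ℝ) (hφmeas : Measurable φ)
    (hφmono : StrictMonoOn φ (Set.Ioi 0))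
    (hφ1 : ∀ t : ℝ, 0 < t → 1 ≤ φ t)
    (hliminf : 0 < liminf (fun t => φ t / t) atTop)
    (hint : Integrable (fun x => φ (μf x)) π) :
    ∃ (M ε : ℝ) (ν : Measure X), 0 < M ∧ 0 < ε ∧ IsProbabilityMeasure ν ∧
      Integrable (fun y => φ (μf y)) ν ∧
      ∀ x : X, μf x ≤ M → ∀ A : Set X, MeasurableSet A →
        ENNReal.ofReal ε * ν A
          ≤ ((q.withDensity (fun y => ENNReal.ofReal (min 1 (μf y / μf x))))
              + ENNReal.ofReal (1 - ∫ y, min 1 (μf y / μf x) ∂q)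
                • Measure.dirac x) A := by
  set g : X → ℝ := fun y => min 1 (μf y) with hg
  have hgmeas : Measurable g := measurable_const.min hμmeas
  have hgpos : ∀ y, 0 < g y := fun y => lt_min one_pos (hμpos y)
  have hgint : Integrable g q := by
    refine Integrable.mono' (integrable_const 1) hgmeas.aestronglyMeasurable ?_
    filter_upwards with y
    rw [Real.norm_eq_abs, abs_of_pos (hgpos y)]
    exact min_le_left _ _
  set c : ℝ := ∫ y, g y ∂q with hc
  have hcpos : 0 < c := by
    rw [hc, integral_pos_iff_support_of_nonneg (fun y => (hgpos y).le) hgint]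
    have : Function.support g = Set.univ := by
      ext y; simp [Function.mem_support, (hgpos y).ne']
    rw [this]
    simp
  have hlint : ∫⁻ y, ENNReal.ofReal (g y) ∂q = ENNReal.ofReal c := by
    rw [hc, ofReal_integral_eq_lintegral_ofReal hgint
      (Filter.Eventually.of_forall fun y => (hgpos y).le)]
  have hcne : ENNReal.ofReal c ≠ 0 := by
    simp [ENNReal.ofReal_eq_zero, not_le, hcpos]
  have hcnetop : ENNReal.ofReal c ≠ ⊤ := ENNReal.ofReal_ne_top
  set m : Measure X := q.withDensity (fun y => ENNReal.ofReal (g y)) with hm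
  set ν : Measure X := (ENNReal.ofReal c)⁻¹ • m with hν
  have hmA : ∀ A : Set X, MeasurableSet A → m A = ∫⁻ y in A, ENNReal.ofReal (g y) ∂q := by
    intro A hA
    rw [hm, withDensity_apply _ hA]
  -- π as a density measure
  have hπ : π = q.withDensity (fun y => ENNReal.ofReal (μf y)) := by
    rw [← Measure.withDensity_rnDeriv_eq π q hac]
    exact (withDensity_congr_ae hd).symm
  have hintq : Integrable (fun y => φ (μf y) * μf y) q := by
    have := hint
    rw [hπ, integrable_withDensity_iff (hμmeas.ennreal_ofReal)
      (Filter.Eventually.of_forall fun y => ENNReal.ofReal_lt_top)] at this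
    simpa [ENNReal.toReal_ofReal (hμpos _).le] using this
  have hintm : Integrable (fun y => φ (μf y)) m := by
    rw [hm, integrable_withDensity_iff (hgmeas.ennreal_ofReal)
      (Filter.Eventually.of_forall fun y => ENNReal.ofReal_lt_top)]
    have hmeas : AEStronglyMeasurable (fun y => φ (μf y) * (ENNReal.ofReal (g y)).toReal) q :=
      ((hφmeas.comp hμmeas).mul (hgmeas.ennreal_ofReal.ennreal_toReal)).aestronglyMeasurable
    refine Integrable.mono hintq hmeas ?_
    filter_upwards with y
    have h1 : 0 ≤ φ (μf y) := le_trans zero_le_one (hφ1 _ (hμpos y))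
    rw [Real.norm_eq_abs, Real.norm_eq_abs, ENNReal.toReal_ofReal (hgpos y).le,
      abs_of_nonneg (mul_nonneg h1 (hgpos y).le),
      abs_of_nonneg (mul_nonneg h1 (hμpos y).le)]
    exact mul_le_mul_of_nonneg_left (min_le_right _ _) h1
  refine ⟨1, c, ν, one_pos, hcpos, ?_, ?_, ?_⟩
  · constructor
    rw [hν, Measure.smul_apply, smul_eq_mul, hmA Set.univ MeasurableSet.univ,
      setLIntegral_univ, hlint, ENNReal.inv_mul_cancel hcne hcnetop]
  · exact hintm.smul_measure (ENNReal.inv_ne_top.mpr hcne)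
  · intro x hx A hA
    have hkey : ENNReal.ofReal c * ν A = m A := by
      rw [hν, Measure.smul_apply, smul_eq_mul, ← mul_assoc,
        ENNReal.mul_inv_cancel hcne hcnetop, one_mul]
    rw [hkey, hmA A hA]
    have hle : ∫⁻ y in A, ENNReal.ofReal (g y) ∂q
        ≤ ∫⁻ y in A, ENNReal.ofReal (min 1 (μf y / μf x)) ∂q := by
      refine lintegral_mono fun y => ENNReal.ofReal_le_ofReal ?_
      refine min_le_min le_rfl ?_
      rw [le_div_iff₀ (hμpos x)]
      calc μf y * μf x ≤ μf y * 1 :=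
            mul_le_mul_of_nonneg_left hx (hμpos y).le
        _ = μf y := mul_one _
    refine le_trans hle ?_
    rw [Measure.add_apply, ← withDensity_apply _ hA]
    exact le_self_add
end

section
/- Suppose the one-step expected acceptance probability of the marginal MH algorithm satisfies α₀ := inf_x ∫ q(x,dy) min{1,r(x,y)} > 0, and the weight distributions Q_x satisfy sup_x ∫ φ(w) Q_x(dw) ≤ M_W for a nondecreasing convex φ : [0,∞) → [1,∞) with φ(t)/t → ∞. Then there exist δ > 0 and w̄ ∈ (1,∞) such that the pseudo-marginal kernel P̃ satisfies P̃V(x,w) ≤ V(w) − δ·V(w)/w for all w ≥ w̄ and P̃V(x,w) ≤ V(w) + M_W for w < w̄, where V(x,w) = φ(w). -/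
open MeasureTheory ProbabilityTheory Filter

/-- Drift away from large weights for the pseudo-marginal algorithm: if the
marginal expected acceptance probability is bounded below by `α₀ > 0`, and the
mean-one weight distributions `Q_x` satisfy `sup_x ∫ φ(w) Q_x(dw) ≤ M_W` for a
nondecreasing convex `φ : [0,∞) → [1,∞)` with `φ(t)/t → ∞`, then there exist
`δ > 0` and `w̄ ∈ (1,∞)` such that (with `V(x,w) = φ(w)`)
`P̃V(x,w) ≤ V(w) − δ V(w)/w` for `w ≥ w̄`, and `P̃V(x,w) ≤ V(w) + M_W` for
`0 < w < w̄`. Here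
`P̃V(x,w) = ∬ min{1, r(x,y)u/w} (φ(u) − φ(w)) Q_y(du) q(x,dy) + φ(w)`. -/
theorem stmt_18 {X : Type*} [MeasurableSpace X]
    (q : Kernel X X) [IsMarkovKernel q]
    (Q : Kernel X ℝ) [IsMarkovKernel Q]
    (r : X → X → ℝ) (hr : ∀ x y, 0 ≤ r x y)
    (hrmeas : Measurable fun p : X × X => r p.1 p.2)
    (hQpos : ∀ y, ∀ᵐ u ∂(Q y), 0 < u)
    (hQmean : ∀ y, ∫ u, u ∂(Q y) = 1)
    (φ : ℝ → ℝ) (hφmeas : Measurable φ)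
    (hφ1 : ∀ t : ℝ, 0 ≤ t → 1 ≤ φ t)
    (hφmono : MonotoneOn φ (Set.Ici 0))
    (hφconv : ConvexOn ℝ (Set.Ici 0) φ)
    (hφsl : Tendsto (fun t => φ t / t) atTop atTop)
    (M_W : ℝ) (hφint : ∀ y, Integrable φ (Q y))
    (hM : ∀ y, ∫ u, φ u ∂(Q y) ≤ M_W)
    (α₀ : ℝ) (hα₀ : 0 < α₀)
    (hacc : ∀ x, α₀ ≤ ∫ y, min 1 (r x y) ∂(q x)) :
    ∃ δ wbar : ℝ, 0 < δ ∧ 1 < wbar ∧ ∀ x : X, ∀ w : ℝ,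
      (wbar ≤ w →
        (∫ y, ∫ u, min 1 (r x y * u / w) * (φ u - φ w) ∂(Q y) ∂(q x)) + φ w
          ≤ φ w - δ * φ w / w) ∧
      (0 < w → w < wbar →
        (∫ y, ∫ u, min 1 (r x y * u / w) * (φ u - φ w) ∂(Q y) ∂(q x)) + φ w
          ≤ φ w + M_W) := by
  rcases isEmpty_or_nonempty X with hX | hX
  · exact ⟨1, 2, one_pos, one_lt_two, fun x => isEmptyElim x⟩
  obtain ⟨x0⟩ := hX
  have hφ0 : (1:ℝ) ≤ φ 0 := hφ1 0 le_rfl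
  have hφpos : ∀ y, ∀ᵐ u ∂(Q y), 0 ≤ φ u :=
    fun y => (hQpos y).mono fun u hu => le_trans zero_le_one (hφ1 u hu.le)
  have hMW1 : (1:ℝ) ≤ M_W := by
    calc (1:ℝ) = ∫ _u, (1:ℝ) ∂(Q x0) := by simp
    _ ≤ ∫ u, φ u ∂(Q x0) := integral_mono_ae (integrable_const 1) (hφint x0)
        ((hQpos x0).mono fun u hu => hφ1 u hu.le)
    _ ≤ M_W := hM x0
  have hu_int : ∀ y, Integrable (fun u : ℝ => u) (Q y) := by
    intro y
    by_contra h
    have h2 := hQmean y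
    rw [integral_undef h] at h2
    norm_num at h2
  -- thresholds from superlinearity
  obtain ⟨T1, hT1⟩ := eventually_atTop.mp (hφsl.eventually_ge_atTop (φ 0 + 2 * M_W))
  obtain ⟨T2, hT2⟩ := eventually_atTop.mp (hφsl.eventually_ge_atTop (8 * M_W / α₀ + 2 * φ 0))
  -- tail bounds
  have htailφ : ∀ y (s : ℝ), ∫ u in Set.Ici s, φ u ∂(Q y) ≤ M_W :=
    fun y s => le_trans (setIntegral_le_integral (hφint y) (hφpos y)) (hM y)
  have htail : ∀ y (s : ℝ), max T1 1 ≤ s → ∫ u in Set.Ici s, u ∂(Q y) ≤ 1/2 := by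
    intro y s hs
    have hs1 : (1:ℝ) ≤ s := le_trans (le_max_right _ _) hs
    have hs0 : (0:ℝ) < s := lt_of_lt_of_le one_pos hs1
    have hslope : φ 0 + 2 * M_W * s ≤ φ s := by
      have h := hT1 s (le_trans (le_max_left _ _) hs)
      rw [le_div_iff₀ hs0] at h
      nlinarith [mul_le_mul_of_nonneg_left hs1 (by linarith : (0:ℝ) ≤ φ 0)]
    have hd : 0 < φ s - φ 0 := by nlinarith
    have hpt : ∀ u ∈ Set.Ici s, u ≤ s / (φ s - φ 0) * φ u := by
      intro u hu
      have hsu : s ≤ u := hu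
      have hu0 : 0 < u := lt_of_lt_of_le hs0 hsu
      have hb0 : 0 ≤ s / u := by positivity
      have hb1 : s / u ≤ 1 := div_le_one_of_le₀ hsu hu0.le
      have hcomb := hφconv.2 (Set.self_mem_Ici) (Set.mem_Ici.mpr hu0.le)
        (by linarith : (0:ℝ) ≤ 1 - s/u) hb0 (by ring)
      simp only [smul_eq_mul] at hcomb
      have harg : (1 - s/u) * (0:ℝ) + (s/u) * u = s := by
        field_simp; ring
      rw [harg] at hcomb
      have e1 : u * ((1 - s/u) * φ 0 + (s/u) * φ u) = u * φ 0 - s * φ 0 + s * φ u := by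
        field_simp
      have h3 := mul_le_mul_of_nonneg_left hcomb hu0.le
      rw [e1] at h3
      have h4 : 0 ≤ s * φ 0 := mul_nonneg hs0.le (by linarith)
      rw [div_mul_eq_mul_div, le_div_iff₀ hd]
      nlinarith
    calc ∫ u in Set.Ici s, u ∂(Q y)
        ≤ ∫ u in Set.Ici s, s / (φ s - φ 0) * φ u ∂(Q y) :=
          setIntegral_mono_on (hu_int y).integrableOn
            ((hφint y).const_mul _).integrableOn measurableSet_Ici hpt
      _ = s / (φ s - φ 0) * ∫ u in Set.Ici s, φ u ∂(Q y) := MeasureTheory.integral_const_mul _ _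
      _ ≤ s / (φ s - φ 0) * M_W := mul_le_mul_of_nonneg_left (htailφ y s) (by positivity)
      _ ≤ 1/2 := by rw [div_mul_eq_mul_div, div_le_iff₀ hd]; linarith
  -- min inequality
  have hmin : ∀ c t : ℝ, 0 ≤ c → 0 ≤ t → t ≤ 1 → min 1 c * t ≤ min 1 (c * t) := by
    intro c t hc ht ht1
    rcases le_total (c * t) 1 with h | h
    · rw [min_eq_right h]
      exact mul_le_mul_of_nonneg_right (min_le_right 1 c) ht
    · rw [min_eq_left h]
      calc min 1 c * t ≤ 1 * 1 := mul_le_mul (min_le_left 1 c) ht1 ht zero_le_one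
      _ = 1 := one_mul 1
  -- measurability / integrability infrastructure
  have hFmeas : ∀ (x : X) (w : ℝ),
      Measurable (fun p : X × ℝ => min 1 (r x p.1 * p.2 / w) * (φ p.2 - φ w)) := by
    intro x w
    have h1 : Measurable fun p : X × ℝ => r x p.1 :=
      hrmeas.comp (measurable_const.prodMk measurable_fst)
    exact (measurable_const.min ((h1.mul measurable_snd).div_const w)).mul
      ((hφmeas.comp measurable_snd).sub measurable_const)
  have hbd : ∀ (x : X) (w : ℝ), 0 < w → ∀ y, ∀ᵐ u ∂(Q y),
      ‖min 1 (r x y * u / w) * (φ u - φ w)‖ ≤ |φ u| + |φ w| := by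
    intro x w hw y
    filter_upwards [hQpos y] with u hu
    have hm0 : 0 ≤ min 1 (r x y * u / w) :=
      le_min zero_le_one (div_nonneg (mul_nonneg (hr x y) hu.le) hw.le)
    have hm1 : min 1 (r x y * u / w) ≤ 1 := min_le_left _ _
    have h2 : ‖min 1 (r x y * u / w)‖ ≤ 1 := by
      rw [Real.norm_eq_abs, abs_of_nonneg hm0]; exact hm1
    calc ‖min 1 (r x y * u / w) * (φ u - φ w)‖
        = ‖min 1 (r x y * u / w)‖ * ‖φ u - φ w‖ := norm_mul _ _
      _ ≤ 1 * (‖φ u‖ + ‖φ w‖) :=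
          mul_le_mul h2 (norm_sub_le _ _) (norm_nonneg _) zero_le_one
      _ = |φ u| + |φ w| := by rw [one_mul, Real.norm_eq_abs, Real.norm_eq_abs]
  have hfint : ∀ (x : X) (w : ℝ), 0 < w → ∀ y,
      Integrable (fun u => min 1 (r x y * u / w) * (φ u - φ w)) (Q y) := by
    intro x w hw y
    refine ((hφint y).abs.add (integrable_const |φ w|)).mono' ?_ (hbd x w hw y)
    exact ((measurable_const.min ((measurable_id.const_mul (r x y)).div_const w)).mul
      (hφmeas.sub measurable_const)).aestronglyMeasurable
  have hImeas : ∀ (x : X) (w : ℝ),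
      StronglyMeasurable (fun y => ∫ u, min 1 (r x y * u / w) * (φ u - φ w) ∂(Q y)) := by
    intro x w
    exact (hFmeas x w).stronglyMeasurable.integral_kernel_prod_right'
  have hIint : ∀ (x : X) (w : ℝ), 0 < w →
      Integrable (fun y => ∫ u, min 1 (r x y * u / w) * (φ u - φ w) ∂(Q y)) (q x) := by
    intro x w hw
    refine (integrable_const (M_W + |φ w|)).mono' (hImeas x w).aestronglyMeasurable ?_
    refine Eventually.of_forall fun y => ?_
    have h1 : ∫ u, |φ u| ∂(Q y) = ∫ u, φ u ∂(Q y) :=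
      integral_congr_ae ((hQpos y).mono fun u hu =>
        abs_of_nonneg (le_trans zero_le_one (hφ1 u hu.le)))
    calc ‖∫ u, min 1 (r x y * u / w) * (φ u - φ w) ∂(Q y)‖
        ≤ ∫ u, ‖min 1 (r x y * u / w) * (φ u - φ w)‖ ∂(Q y) :=
          norm_integral_le_integral_norm _
      _ ≤ ∫ u, (|φ u| + |φ w|) ∂(Q y) :=
          integral_mono_ae (hfint x w hw y).norm
            ((hφint y).abs.add (integrable_const _)) (hbd x w hw y)
      _ = (∫ u, |φ u| ∂(Q y)) + |φ w| := by
          rw [integral_add (hφint y).abs (integrable_const _), integral_const]; simp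
      _ ≤ M_W + |φ w| := by rw [h1]; linarith [hM y]
  -- claim 2 bound
  have key2 : ∀ (x : X) (w : ℝ), 0 < w →
      (∫ y, ∫ u, min 1 (r x y * u / w) * (φ u - φ w) ∂(Q y) ∂(q x)) ≤ M_W := by
    intro x w hw
    have hinner : ∀ y, (∫ u, min 1 (r x y * u / w) * (φ u - φ w) ∂(Q y)) ≤ M_W := by
      intro y
      have h1 : (∫ u, min 1 (r x y * u / w) * (φ u - φ w) ∂(Q y)) ≤ ∫ u, φ u ∂(Q y) := by
        refine integral_mono_ae (hfint x w hw y) (hφint y) ?_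
        filter_upwards [hQpos y] with u hu
        have hm0 : 0 ≤ min 1 (r x y * u / w) :=
          le_min zero_le_one (div_nonneg (mul_nonneg (hr x y) hu.le) hw.le)
        have hm1 : min 1 (r x y * u / w) ≤ 1 := min_le_left _ _
        have hφu := hφ1 u hu.le
        have hφw := hφ1 w hw.le
        nlinarith [mul_nonneg hm0 (by linarith : (0:ℝ) ≤ φ w),
          mul_nonneg (sub_nonneg.mpr hm1) (by linarith : (0:ℝ) ≤ φ u)]
      exact h1.trans (hM y)
    calc (∫ y, ∫ u, min 1 (r x y * u / w) * (φ u - φ w) ∂(Q y) ∂(q x))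
        ≤ ∫ _y, M_W ∂(q x) :=
          integral_mono (hIint x w hw) (integrable_const _) hinner
      _ = M_W := by simp
  -- assemble
  set wbar : ℝ := max 2 (max (2 * max T1 1) T2) with hwbar
  have hwbar1 : (1:ℝ) < wbar := lt_of_lt_of_le one_lt_two (le_max_left _ _)
  refine ⟨α₀ / 8, wbar, by positivity, hwbar1, fun x w => ⟨fun hw => ?_, fun hw0 _ => ?_⟩⟩
  swap
  · linarith [key2 x w hw0]
  -- main drift claim
  have hw2 : (2:ℝ) ≤ w := le_trans (le_max_left _ _) hw
  have hw0 : (0:ℝ) < w := by linarith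
  have hw1 : (1:ℝ) ≤ w := by linarith
  have hsT : max T1 1 ≤ w / 2 := by
    have h := le_trans (le_trans (le_max_left (2 * max T1 1) T2) (le_max_right 2 _)) hw
    linarith
  have hwT2 : T2 ≤ w := le_trans (le_trans (le_max_right _ _) (le_max_right 2 _)) hw
  have hφw : (8 * M_W / α₀ + 2 * φ 0) * w ≤ φ w := by
    have h := hT2 w hwT2; rw [le_div_iff₀ hw0] at h; exact h
  have hs0 : (0:ℝ) < w / 2 := by linarith
  have hφ0w : φ 0 ≤ φ w :=
    hφmono Set.self_mem_Ici (Set.mem_Ici.mpr hw0.le) hw0.le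
  have hφs : φ (w / 2) ≤ (φ 0 + φ w) / 2 := by
    have hcomb := hφconv.2 Set.self_mem_Ici (Set.mem_Ici.mpr hw0.le)
      (by norm_num : (0:ℝ) ≤ (1:ℝ)/2) (by norm_num : (0:ℝ) ≤ (1:ℝ)/2) (by norm_num)
    simp only [smul_eq_mul] at hcomb
    have harg : (1:ℝ)/2 * 0 + (1:ℝ)/2 * w = w / 2 := by ring
    rw [harg] at hcomb
    linarith
  -- per-y bound
  have hper : ∀ y, (∫ u, min 1 (r x y * u / w) * (φ u - φ w) ∂(Q y))
      ≤ M_W + (φ 0 - φ w) / (4 * w) * min 1 (r x y) := by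
    intro y
    set m := min 1 (r x y) with hm
    have hm0 : 0 ≤ m := le_min zero_le_one (hr x y)
    set K : ℝ := (φ 0 - φ w) / 2 with hK
    have hK0 : K ≤ 0 := by rw [hK]; linarith
    set a := m * K / w with ha
    have ha0 : a ≤ 0 := by
      rw [ha, div_nonpos_iff]
      right
      exact ⟨mul_nonpos_of_nonneg_of_nonpos hm0 hK0, hw0.le⟩
    have hind_int : Integrable ((Set.Ici (w/2)).indicator (fun u => φ u - a * u)) (Q y) := by
      rw [integrable_indicator_iff measurableSet_Ici]
      exact ((hφint y).sub ((hu_int y).const_mul a)).integrableOn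
    have hh_int : Integrable
        (fun u => a * u + (Set.Ici (w/2)).indicator (fun u => φ u - a * u) u) (Q y) :=
      ((hu_int y).const_mul a).add hind_int
    have hfh : ∀ᵐ u ∂(Q y), min 1 (r x y * u / w) * (φ u - φ w)
        ≤ a * u + (Set.Ici (w/2)).indicator (fun u => φ u - a * u) u := by
      filter_upwards [hQpos y] with u hu
      rcases lt_or_ge u (w/2) with hus | hus
      · rw [Set.indicator_of_notMem (by simpa using hus.not_ge)]
        have huw : u ≤ w := by linarith
        have h1 : m * (u / w) ≤ min 1 (r x y * (u / w)) :=
          hmin (r x y) (u / w) (hr x y) (div_nonneg hu.le hw0.le)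
            (by rw [div_le_one hw0]; linarith)
        have h1' : m * (u / w) ≤ min 1 (r x y * u / w) := by rwa [mul_div_assoc]
        have hneg : φ u - φ w ≤ 0 := sub_nonpos.mpr
          (hφmono (Set.mem_Ici.mpr hu.le) (Set.mem_Ici.mpr hw0.le) huw)
        have step1 : min 1 (r x y * u / w) * (φ u - φ w) ≤ m * (u / w) * (φ u - φ w) :=
          mul_le_mul_of_nonpos_right h1' hneg
        have hφus : φ u ≤ φ (w/2) :=
          hφmono (Set.mem_Ici.mpr hu.le) (Set.mem_Ici.mpr hs0.le) hus.le
        have step2 : φ u - φ w ≤ K := by rw [hK]; linarith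
        have hnn : 0 ≤ m * (u / w) := mul_nonneg hm0 (div_nonneg hu.le hw0.le)
        have step3 : m * (u / w) * (φ u - φ w) ≤ m * (u / w) * K :=
          mul_le_mul_of_nonneg_left step2 hnn
        have heq : m * (u / w) * K = a * u := by rw [ha]; ring
        linarith
      · rw [Set.indicator_of_mem (Set.mem_Ici.mpr hus)]
        have hm0' : 0 ≤ min 1 (r x y * u / w) :=
          le_min zero_le_one (div_nonneg (mul_nonneg (hr x y) hu.le) hw0.le)
        have hm1' : min 1 (r x y * u / w) ≤ 1 := min_le_left _ _
        have hφu := hφ1 u hu.le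
        have hφwpos := hφ1 w hw0.le
        have heq : a * u + (φ u - a * u) = φ u := by ring
        rw [heq]
        nlinarith [mul_nonneg hm0' (by linarith : (0:ℝ) ≤ φ w),
          mul_nonneg (sub_nonneg.mpr hm1') (by linarith : (0:ℝ) ≤ φ u)]
    have hIle : (∫ u, min 1 (r x y * u / w) * (φ u - φ w) ∂(Q y))
        ≤ ∫ u, (a * u + (Set.Ici (w/2)).indicator (fun u => φ u - a * u) u) ∂(Q y) :=
      integral_mono_ae (hfint x w hw0 y) hh_int hfh
    have hsplit : ∫ u, (a * u + (Set.Ici (w/2)).indicator (fun u => φ u - a * u) u) ∂(Q y)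
        = a * 1 + ((∫ u in Set.Ici (w/2), φ u ∂(Q y))
            - a * ∫ u in Set.Ici (w/2), u ∂(Q y)) := by
      rw [integral_add ((hu_int y).const_mul a) hind_int,
        MeasureTheory.integral_const_mul, hQmean y,
        integral_indicator measurableSet_Ici,
        integral_sub (hφint y).integrableOn ((hu_int y).const_mul a).integrableOn,
        MeasureTheory.integral_const_mul]
    have hTU := htail y (w/2) hsT
    have hTΦ := htailφ y (w/2)
    have h2 : ∫ u, (a * u + (Set.Ici (w/2)).indicator (fun u => φ u - a * u) u) ∂(Q y)
        ≤ M_W + a / 2 := by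
      rw [hsplit]
      have h3 : (-a) * (∫ u in Set.Ici (w/2), u ∂(Q y)) ≤ (-a) * (1/2) :=
        mul_le_mul_of_nonneg_left hTU (by linarith)
      linarith
    have heq2 : M_W + a / 2 = M_W + (φ 0 - φ w) / (4 * w) * m := by rw [ha, hK]; ring
    linarith [hIle, h2, heq2.le]
  -- integrate the per-y bound over y
  have hmin_int : Integrable (fun y => min 1 (r x y)) (q x) := by
    refine (integrable_const (1:ℝ)).mono'
      ((measurable_const.min
        (hrmeas.comp (measurable_const.prodMk measurable_id))).aestronglyMeasurable) ?_
    refine Eventually.of_forall fun y => ?_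
    rw [Real.norm_eq_abs, abs_le]
    exact ⟨le_min (by norm_num) (by linarith [hr x y]), by simpa using min_le_left 1 (r x y)⟩
  have houter : (∫ y, ∫ u, min 1 (r x y * u / w) * (φ u - φ w) ∂(Q y) ∂(q x))
      ≤ M_W + (φ 0 - φ w) / (4 * w) * α₀ := by
    calc (∫ y, ∫ u, min 1 (r x y * u / w) * (φ u - φ w) ∂(Q y) ∂(q x))
        ≤ ∫ y, (M_W + (φ 0 - φ w) / (4 * w) * min 1 (r x y)) ∂(q x) :=
          integral_mono (hIint x w hw0)
            ((integrable_const M_W).add (hmin_int.const_mul _)) hper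
      _ = M_W + (φ 0 - φ w) / (4 * w) * ∫ y, min 1 (r x y) ∂(q x) := by
          rw [integral_add (integrable_const M_W) (hmin_int.const_mul _),
            integral_const, MeasureTheory.integral_const_mul]
          simp
      _ ≤ M_W + (φ 0 - φ w) / (4 * w) * α₀ := by
          have hnp : (φ 0 - φ w) / (4 * w) ≤ 0 := by
            rw [div_nonpos_iff]; right; exact ⟨by linarith, by linarith⟩
          have h := mul_le_mul_of_nonpos_left (hacc x) hnp
          linarith
  -- final arithmetic
  have hfinal : M_W + (φ 0 - φ w) / (4 * w) * α₀ ≤ -(α₀ / 8 * φ w / w) := by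
    have h8 : (0:ℝ) < 8 * w := by linarith
    refine le_of_mul_le_mul_right ?_ h8
    have e1 : (M_W + (φ 0 - φ w) / (4 * w) * α₀) * (8 * w)
        = 8 * w * M_W + 2 * α₀ * (φ 0 - φ w) := by
      field_simp; ring
    have e2 : -(α₀ / 8 * φ w / w) * (8 * w) = -(α₀ * φ w) := by
      field_simp
    rw [e1, e2]
    have hbig : 8 * M_W * w + 2 * α₀ * (φ 0 * w) ≤ α₀ * φ w := by
      have h5 := mul_le_mul_of_nonneg_left hφw hα₀.le
      have e3 : α₀ * ((8 * M_W / α₀ + 2 * φ 0) * w)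
          = 8 * M_W * w + 2 * α₀ * (φ 0 * w) := by
        field_simp
      rw [e3] at h5; linarith
    have h6 : φ 0 ≤ φ 0 * w := le_mul_of_one_le_right (by linarith) hw1
    linarith [mul_le_mul_of_nonneg_left h6 hα₀.le]
  linarith [houter, hfinal]
end

section
/- In the setting of the drift away from large weights, if φ(w) = w^β + 1 for some β > 1, then the pseudo-marginal kernel satisfies the polynomial drift P̃V(x,w) ≤ V(w) − δ·V(w)^{(β−1)/β} + b_V·1{w ∈ (0, w̄)} with V(w) = w^β + 1 and b_V = M_W + δ·V(w̄)^{(β−1)/β}. -/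
open MeasureTheory ProbabilityTheory Filter

private lemma stmt19_meas_rpow (β : ℝ) : Measurable fun u : ℝ => u ^ β := by
  measurability

private lemma stmt19_integrable_of_mean {μ : Measure ℝ} {f : ℝ → ℝ}
    (h : ∫ u, f u ∂μ = 1) : Integrable f μ := by
  by_contra hc
  rw [integral_undef hc] at h; norm_num at h

set_option maxHeartbeats 4000000 in
/-- Polynomial drift for the pseudo-marginal algorithm with `φ(w) = w^β + 1`,
`β > 1`: under the assumptions of the drift away from large weights (marginal
one-step acceptance probability `≥ α₀ > 0`, mean-one weights with
`sup_x ∫ (w^β + 1) Q_x(dw) ≤ M_W`), there exist `δ > 0` and `w̄ ∈ (1,∞)` such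
that, with `V(w) = w^β + 1` and `b_V = M_W + δ V(w̄)^{(β−1)/β}`,
`P̃V(x,w) ≤ V(w) − δ V(w)^{(β−1)/β} + b_V·1{w ∈ (0,w̄)}` for all `x` and `w > 0`. -/
theorem stmt_19 {X : Type*} [MeasurableSpace X]
    (q : Kernel X X) [IsMarkovKernel q]
    (Q : Kernel X ℝ) [IsMarkovKernel Q]
    (r : X → X → ℝ) (hr : ∀ x y, 0 ≤ r x y)
    (hrmeas : Measurable fun p : X × X => r p.1 p.2)
    (hQpos : ∀ y, ∀ᵐ u ∂(Q y), 0 < u)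
    (hQmean : ∀ y, ∫ u, u ∂(Q y) = 1)
    (β : ℝ) (hβ : 1 < β)
    (M_W : ℝ) (hφint : ∀ y, Integrable (fun u : ℝ => u ^ β + 1) (Q y))
    (hM : ∀ y, ∫ u, (u ^ β + 1) ∂(Q y) ≤ M_W)
    (α₀ : ℝ) (hα₀ : 0 < α₀)
    (hacc : ∀ x, α₀ ≤ ∫ y, min 1 (r x y) ∂(q x)) :
    ∃ δ wbar : ℝ, 0 < δ ∧ 1 < wbar ∧ ∀ x : X, ∀ w : ℝ, 0 < w →
      (∫ y, ∫ u, min 1 (r x y * u / w) * ((u ^ β + 1) - (w ^ β + 1)) ∂(Q y) ∂(q x))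
          + (w ^ β + 1)
        ≤ (w ^ β + 1) - δ * (w ^ β + 1) ^ ((β - 1) / β)
          + (if w < wbar then M_W + δ * (wbar ^ β + 1) ^ ((β - 1) / β) else 0) := by
  rcases isEmpty_or_nonempty X with hX | hX
  · exact ⟨1, 2, one_pos, one_lt_two, fun x => (hX.false x).elim⟩
  have hβ0 : (0:ℝ) < β := by linarith
  have hβ1 : (0:ℝ) < β - 1 := by linarith
  -- M_W ≥ 1
  have hMW1 : (1:ℝ) ≤ M_W := by
    obtain ⟨y⟩ := hX
    refine le_trans ?_ (hM y)
    have h2 : ∫ (_u:ℝ), (1:ℝ) ∂(Q y) ≤ ∫ u, (u ^ β + 1) ∂(Q y) := by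
      refine integral_mono_ae (integrable_const 1) (hφint y) ?_
      filter_upwards [hQpos y] with u hu
      have : (0:ℝ) ≤ u ^ β := Real.rpow_nonneg hu.le β
      linarith
    simpa using h2
  -- constants
  set c : ℝ := 1 - (1/2:ℝ) ^ β with hc_def
  have hhalfβ : (0:ℝ) ≤ (1/2:ℝ) ^ β := Real.rpow_nonneg (by norm_num) β
  have hc_pos : 0 < c := by
    have : (1/2:ℝ) ^ β < 1 := Real.rpow_lt_one (by norm_num) (by norm_num) hβ0
    rw [hc_def]; linarith
  have hc_le1 : c ≤ 1 := by rw [hc_def]; linarith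
  set a : ℝ := max 1 ((2*M_W) ^ (1/(β-1)) : ℝ) with ha_def
  have ha1 : (1:ℝ) ≤ a := le_max_left _ _
  have ha0 : (0:ℝ) < a := lt_of_lt_of_le one_pos ha1
  have haM : 2 * M_W ≤ a ^ (β - 1) := by
    have hb0 : (0:ℝ) ≤ 2 * M_W := by linarith
    have h1 : 2 * M_W = ((2*M_W) ^ (1/(β-1))) ^ (β-1) := by
      rw [← Real.rpow_mul hb0]
      rw [one_div, inv_mul_cancel₀ hβ1.ne', Real.rpow_one]
    rw [h1]
    exact Real.rpow_le_rpow (Real.rpow_nonneg hb0 _) (le_max_right _ _) hβ1.le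
  set δ : ℝ := c * α₀ / 8 with hδ_def
  have hδ0 : 0 < δ := by rw [hδ_def]; positivity
  have hca0 : 0 < c * α₀ := mul_pos hc_pos hα₀
  set wbar : ℝ := max (2*a) (max 2 ((8*M_W/(c*α₀)) ^ (1/(β-1)))) with hwbar_def
  have hwbar2 : (2:ℝ) ≤ wbar := le_trans (le_max_left 2 _) (le_max_right _ _)
  have hwbar_ge2a : 2*a ≤ wbar := le_max_left _ _
  have hwbar_base : (8*M_W/(c*α₀)) ^ (1/(β-1)) ≤ wbar :=
    le_trans (le_max_right 2 _) (le_max_right _ _)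
  refine ⟨δ, wbar, hδ0, by linarith, ?_⟩
  -- basic integrabilities
  have hint_uβ : ∀ y, Integrable (fun u : ℝ => u ^ β) (Q y) := fun y => by
    have h := (hφint y).sub (integrable_const (1:ℝ))
    exact h.congr (Filter.Eventually.of_forall fun u => by simp)
  have hint_u : ∀ y, Integrable (fun u : ℝ => u) (Q y) := fun y =>
    stmt19_integrable_of_mean (hQmean y)
  have huβ_nonneg : ∀ y, 0 ≤ ∫ u, u ^ β ∂(Q y) := fun y => by
    refine integral_nonneg_of_ae ?_
    filter_upwards [hQpos y] with u hu
    exact Real.rpow_nonneg hu.le β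
  have huβ_le : ∀ y, ∫ u, u ^ β ∂(Q y) ≤ M_W - 1 := by
    intro y
    have h := hM y
    rw [integral_add (hint_uβ y) (integrable_const 1)] at h
    simp at h
    linarith
  -- ψ and χ
  set ψ : ℝ → ℝ := fun u => if u ≤ a then u else 0 with hψ_def
  set χ : ℝ → ℝ := fun u => if u ≤ a then 0 else u with hχ_def
  have hψ_meas : Measurable ψ := Measurable.ite measurableSet_Iic measurable_id measurable_const
  have hχ_meas : Measurable χ := Measurable.ite measurableSet_Iic measurable_const measurable_id
  clear_value c a δ wbar ψ χ
  have hint_ψ : ∀ y, Integrable ψ (Q y) := by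
    intro y
    refine (hint_u y).abs.mono' hψ_meas.aestronglyMeasurable (Eventually.of_forall fun u => ?_)
    by_cases h : u ≤ a <;> simp [hψ_def, h]
  have hint_χ : ∀ y, Integrable χ (Q y) := by
    intro y
    refine (hint_u y).abs.mono' hχ_meas.aestronglyMeasurable (Eventually.of_forall fun u => ?_)
    by_cases h : u ≤ a <;> simp [hχ_def, h]
  have hψ_half : ∀ y, (1/2 : ℝ) ≤ ∫ u, ψ u ∂(Q y) := by
    intro y
    have hχ_le : ∫ u, χ u ∂(Q y) ≤ 1/2 := by
      have hpt : ∀ᵐ u ∂(Q y), χ u ≤ a ^ (1-β) * u ^ β := by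
        filter_upwards [hQpos y] with u hu
        by_cases h : u ≤ a
        · simp only [hχ_def, if_pos h]
          positivity
        · push_neg at h
          simp only [hχ_def, if_neg (not_le.mpr h)]
          have h1 : u = u ^ β * u ^ (1-β) := by
            rw [← Real.rpow_add hu]; norm_num
          have h2 : u ^ (1-β) ≤ a ^ (1-β) :=
            Real.rpow_le_rpow_of_nonpos ha0 h.le (by linarith)
          calc u = u ^ β * u ^ (1-β) := h1
            _ ≤ u ^ β * a ^ (1-β) :=
                mul_le_mul_of_nonneg_left h2 (Real.rpow_nonneg hu.le β)
            _ = a ^ (1-β) * u ^ β := mul_comm _ _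
      have h1 := integral_mono_ae (hint_χ y) ((hint_uβ y).const_mul _) hpt
      rw [integral_const_mul] at h1
      have hainv : a ^ (1-β) ≤ (2*M_W)⁻¹ := by
        rw [show (1-β) = -(β-1) by ring, Real.rpow_neg ha0.le]
        exact inv_anti₀ (by linarith) haM
      have hainv0 : (0:ℝ) ≤ a ^ (1-β) := Real.rpow_nonneg ha0.le _
      have h2 : a ^ (1-β) * ∫ u, u ^ β ∂(Q y) ≤ (2*M_W)⁻¹ * M_W := by
        apply mul_le_mul hainv (le_trans (huβ_le y) (by linarith)) (huβ_nonneg y)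
        positivity
      have h3 : (2*M_W)⁻¹ * M_W = 1/2 := by
        field_simp
      linarith
    have hsum : (∫ u, ψ u ∂(Q y)) + (∫ u, χ u ∂(Q y)) = 1 := by
      rw [← integral_add (hint_ψ y) (hint_χ y)]
      have : ∀ u, ψ u + χ u = u := by
        intro u; by_cases h : u ≤ a <;> simp [hψ_def, hχ_def, h]
      simp only [this]
      exact hQmean y
    linarith
  -- pointwise generic bounds
  have hmin_mem : ∀ x y (w u : ℝ), 0 < w → 0 < u →
      0 ≤ min 1 (r x y * u / w) ∧ min 1 (r x y * u / w) ≤ 1 := by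
    intro x y w u hw hu
    exact ⟨le_min zero_le_one (div_nonneg (mul_nonneg (hr x y) hu.le) hw.le), min_le_left _ _⟩
  have hpt_gen : ∀ x y (w u : ℝ), 0 < w → 0 < u →
      min 1 (r x y * u / w) * ((u ^ β + 1) - (w ^ β + 1)) ≤ u ^ β + 1 := by
    intro x y w u hw hu
    obtain ⟨hm0, hm1⟩ := hmin_mem x y w u hw hu
    have huβ0 : (0:ℝ) ≤ u ^ β := Real.rpow_nonneg hu.le β
    have hwβ0 : (0:ℝ) ≤ w ^ β := Real.rpow_nonneg hw.le β
    rcases le_or_gt ((u ^ β + 1) - (w ^ β + 1)) 0 with h | h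
    · nlinarith [mul_nonpos_of_nonneg_of_nonpos hm0 h]
    · nlinarith [mul_le_mul_of_nonneg_right hm1 h.le]
  have hnorm_le : ∀ x y (w u : ℝ), 0 < w → 0 < u →
      ‖min 1 (r x y * u / w) * ((u ^ β + 1) - (w ^ β + 1))‖ ≤ (u ^ β + 1) + (w ^ β + 1) := by
    intro x y w u hw hu
    obtain ⟨hm0, hm1⟩ := hmin_mem x y w u hw hu
    have huβ0 : (0:ℝ) ≤ u ^ β := Real.rpow_nonneg hu.le β
    have hwβ0 : (0:ℝ) ≤ w ^ β := Real.rpow_nonneg hw.le β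
    rw [Real.norm_eq_abs, abs_mul]
    calc |min 1 (r x y * u / w)| * |(u ^ β + 1) - (w ^ β + 1)|
        ≤ 1 * ((u ^ β + 1) + (w ^ β + 1)) := by
          apply mul_le_mul
          · rw [abs_of_nonneg hm0]; exact hm1
          · refine le_trans (abs_sub _ _) ?_
            rw [abs_of_nonneg (by linarith), abs_of_nonneg (by linarith)]
          · exact abs_nonneg _
          · norm_num
      _ = (u ^ β + 1) + (w ^ β + 1) := one_mul _
  -- measurability and integrability of inner integrand
  have hmeas_inner : ∀ x y (w : ℝ),
      Measurable (fun u : ℝ => min 1 (r x y * u / w) * ((u ^ β + 1) - (w ^ β + 1))) := by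
    intro x y w
    apply Measurable.mul
    · exact measurable_const.min (((measurable_id.const_mul (r x y)).div_const w))
    · exact ((stmt19_meas_rpow β).add_const 1).sub_const _
  have hint_inner : ∀ x y (w : ℝ), 0 < w →
      Integrable (fun u : ℝ => min 1 (r x y * u / w) * ((u ^ β + 1) - (w ^ β + 1))) (Q y) := by
    intro x y w hw
    refine Integrable.mono' ((hφint y).add (integrable_const (w ^ β + 1)))
      (hmeas_inner x y w).aestronglyMeasurable ?_
    filter_upwards [hQpos y] with u hu
    exact hnorm_le x y w u hw hu
  -- inner integral: crude bound
  have hinner_le_MW : ∀ x y (w : ℝ), 0 < w →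
      (∫ u, min 1 (r x y * u / w) * ((u ^ β + 1) - (w ^ β + 1)) ∂(Q y)) ≤ M_W := by
    intro x y w hw
    refine le_trans (integral_mono_ae (hint_inner x y w hw) (hφint y) ?_) (hM y)
    filter_upwards [hQpos y] with u hu
    exact hpt_gen x y w u hw hu
  -- inner integral: strong bound for large w
  have hinner_strong : ∀ x y (w : ℝ), wbar ≤ w →
      (∫ u, min 1 (r x y * u / w) * ((u ^ β + 1) - (w ^ β + 1)) ∂(Q y))
        ≤ M_W - (c/2 * w ^ (β-1)) * min 1 (r x y) := by
    intro x y w hwge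
    have hw2a : 2*a ≤ w := le_trans hwbar_ge2a hwge
    have hw0 : (0:ℝ) < w := by linarith
    set s := min 1 (r x y) with hs_def
    clear_value s
    have hs0 : 0 ≤ s := hs_def ▸ le_min zero_le_one (hr x y)
    have hs1 : s ≤ 1 := hs_def ▸ min_le_left _ _
    have hwβ10 : (0:ℝ) ≤ w ^ (β-1) := Real.rpow_nonneg hw0.le _
    have hC0 : 0 ≤ c * s * w ^ (β-1) := mul_nonneg (mul_nonneg hc_pos.le hs0) hwβ10
    have hpt : ∀ᵐ u ∂(Q y), min 1 (r x y * u / w) * ((u ^ β + 1) - (w ^ β + 1))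
        ≤ (u ^ β + 1) - (c * s * w ^ (β-1)) * ψ u := by
      filter_upwards [hQpos y] with u hu
      obtain ⟨hm0, hm1⟩ := hmin_mem x y w u hw0 hu
      by_cases hua : u ≤ a
      · simp only [hψ_def, if_pos hua]
        have hu_w : u ≤ w := by linarith
        have huw1 : u / w ≤ 1 := (div_le_one hw0).mpr hu_w
        have huw0 : 0 ≤ u / w := div_nonneg hu.le hw0.le
        have hm_ge : s * (u/w) ≤ min 1 (r x y * u / w) := by
          rcases le_or_gt 1 (r x y * u / w) with h | h
          · rw [min_eq_left h]
            exact mul_le_one₀ hs1 huw0 huw1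
          · rw [min_eq_right h.le]
            calc s * (u/w) ≤ r x y * (u/w) :=
                mul_le_mul_of_nonneg_right (hs_def ▸ min_le_right 1 (r x y)) huw0
              _ = r x y * u / w := by ring
        have huβ0 : (0:ℝ) ≤ u ^ β := Real.rpow_nonneg hu.le β
        have hdrop : (u ^ β + 1) - (w ^ β + 1) ≤ -(c * w ^ β) := by
          have h1 : u ^ β ≤ a ^ β := Real.rpow_le_rpow hu.le hua hβ0.le
          have h2 : a ≤ w/2 := by linarith
          have h3 : a ^ β ≤ (w/2) ^ β := Real.rpow_le_rpow ha0.le h2 hβ0.le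
          have h4 : (w/2) ^ β = w ^ β * (1/2) ^ β := by
            rw [show w/2 = w * (1/2) by ring, Real.mul_rpow hw0.le (by norm_num)]
          have h5 : c * w ^ β = w ^ β - (1/2) ^ β * w ^ β := by rw [hc_def]; ring
          linarith [h1, h3, h4, h5]
        have ht_neg : (u ^ β + 1) - (w ^ β + 1) ≤ 0 := by
          nlinarith [Real.rpow_nonneg hw0.le β]
        have hsu0 : 0 ≤ s * (u/w) := mul_nonneg hs0 huw0
        have step1 : min 1 (r x y * u / w) * ((u ^ β + 1) - (w ^ β + 1))
            ≤ (s * (u/w)) * ((u ^ β + 1) - (w ^ β + 1)) :=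
          mul_le_mul_of_nonpos_right hm_ge ht_neg
        have step2 : (s * (u/w)) * ((u ^ β + 1) - (w ^ β + 1)) ≤ (s * (u/w)) * (-(c * w ^ β)) :=
          mul_le_mul_of_nonneg_left hdrop hsu0
        have hww : w ^ β = w ^ (β-1) * w := by
          rw [← Real.rpow_add_one hw0.ne' (β-1)]; norm_num
        have heq : (s * (u/w)) * (-(c * w ^ β)) = -((c * s * w ^ (β-1)) * u) := by
          rw [hww]; field_simp
        linarith
      · simp only [hψ_def, if_neg hua, mul_zero, sub_zero]
        exact hpt_gen x y w u hw0 hu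
    have hint_rhs : Integrable (fun u => (u ^ β + 1) - (c * s * w ^ (β-1)) * ψ u) (Q y) := by
      have h := (hφint y).sub ((hint_ψ y).const_mul (c * s * w ^ (β-1)))
      exact h.congr (Filter.Eventually.of_forall fun u => by simp)
    refine le_trans (integral_mono_ae (hint_inner x y w hw0) hint_rhs hpt) ?_
    rw [integral_sub (hφint y) ((hint_ψ y).const_mul _), integral_const_mul]
    have h6 : (c * s * w ^ (β-1)) * (1/2) ≤ (c * s * w ^ (β-1)) * ∫ u, ψ u ∂(Q y) :=
      mul_le_mul_of_nonneg_left (hψ_half y) hC0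
    have h7 : (c/2 * w ^ (β-1)) * s = (c * s * w ^ (β-1)) * (1/2) := by ring
    linarith [hM y]
  -- outer integral facts
  have hF_meas : ∀ x (w : ℝ), AEStronglyMeasurable
      (fun y => ∫ u, min 1 (r x y * u / w) * ((u ^ β + 1) - (w ^ β + 1)) ∂(Q y)) (q x) := by
    intro x w
    have h1 : Measurable fun p : X × ℝ => r x p.1 :=
      hrmeas.comp (measurable_const.prodMk measurable_fst)
    have h2 : Measurable fun p : X × ℝ =>
        min 1 (r x p.1 * p.2 / w) * ((p.2 ^ β + 1) - (w ^ β + 1)) := by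
      apply Measurable.mul
      · exact measurable_const.min ((h1.mul measurable_snd).div_const w)
      · exact (((stmt19_meas_rpow β).comp measurable_snd).add_const 1).sub_const _
    exact (StronglyMeasurable.integral_kernel_prod_right
      (f := fun y u => min 1 (r x y * u / w) * ((u ^ β + 1) - (w ^ β + 1)))
      h2.stronglyMeasurable).aestronglyMeasurable
  have hF_int : ∀ x (w : ℝ), 0 < w → Integrable
      (fun y => ∫ u, min 1 (r x y * u / w) * ((u ^ β + 1) - (w ^ β + 1)) ∂(Q y)) (q x) := by
    intro x w hw
    refine Integrable.mono' (integrable_const (M_W + (w ^ β + 1))) (hF_meas x w)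
      (Eventually.of_forall fun y => ?_)
    refine le_trans (norm_integral_le_integral_norm _) ?_
    have hb : ∫ u, ‖min 1 (r x y * u / w) * ((u ^ β + 1) - (w ^ β + 1))‖ ∂(Q y)
        ≤ ∫ u, ((u ^ β + 1) + (w ^ β + 1)) ∂(Q y) := by
      refine integral_mono_ae (hint_inner x y w hw).norm
        ((hφint y).add (integrable_const _)) ?_
      filter_upwards [hQpos y] with u hu
      exact hnorm_le x y w u hw hu
    refine le_trans hb ?_
    rw [integral_add (hφint y) (integrable_const _), integral_const]
    simp only [probReal_univ, one_smul]
    linarith [hM y]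
  have hmin_int : ∀ x, Integrable (fun y => min 1 (r x y)) (q x) := by
    intro x
    have hm : Measurable fun y => min 1 (r x y) :=
      measurable_const.min (hrmeas.comp (measurable_const.prodMk measurable_id))
    refine Integrable.mono' (integrable_const 1) hm.aestronglyMeasurable
      (Eventually.of_forall fun y => ?_)
    rw [Real.norm_eq_abs, abs_of_nonneg (le_min zero_le_one (hr x y))]
    exact min_le_left _ _
  -- main proof
  intro x w hw
  have hp0 : (0:ℝ) ≤ (β-1)/β := div_nonneg hβ1.le hβ0.le
  by_cases hcase : w < wbar
  · rw [if_pos hcase]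
    have houter : (∫ y, ∫ u, min 1 (r x y * u / w) * ((u ^ β + 1) - (w ^ β + 1)) ∂(Q y) ∂(q x))
        ≤ M_W := by
      calc (∫ y, ∫ u, min 1 (r x y * u / w) * ((u ^ β + 1) - (w ^ β + 1)) ∂(Q y) ∂(q x))
          ≤ ∫ _y, M_W ∂(q x) := integral_mono_ae (hF_int x w hw) (integrable_const _)
            (Eventually.of_forall fun y => hinner_le_MW x y w hw)
        _ = M_W := by simp
    have hmono : δ * (w ^ β + 1) ^ ((β-1)/β) ≤ δ * (wbar ^ β + 1) ^ ((β-1)/β) := by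
      apply mul_le_mul_of_nonneg_left _ hδ0.le
      apply Real.rpow_le_rpow (by positivity) _ hp0
      have : w ^ β ≤ wbar ^ β := Real.rpow_le_rpow hw.le hcase.le hβ0.le
      linarith
    linarith
  · rw [if_neg hcase]
    push_neg at hcase
    have hw1 : (1:ℝ) ≤ w := by linarith
    have hwβ10 : (0:ℝ) ≤ w ^ (β-1) := Real.rpow_nonneg hw.le _
    have houter : (∫ y, ∫ u, min 1 (r x y * u / w) * ((u ^ β + 1) - (w ^ β + 1)) ∂(Q y) ∂(q x))
        ≤ M_W - (c/2 * w ^ (β-1)) * α₀ := by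
      have h1 : (∫ y, ∫ u, min 1 (r x y * u / w) * ((u ^ β + 1) - (w ^ β + 1)) ∂(Q y) ∂(q x))
          ≤ ∫ y, (M_W - (c/2 * w ^ (β-1)) * min 1 (r x y)) ∂(q x) :=
        integral_mono_ae (hF_int x w hw)
          ((integrable_const _).sub ((hmin_int x).const_mul _))
          (Eventually.of_forall fun y => hinner_strong x y w hcase)
      have h2 : ∫ y, (M_W - (c/2 * w ^ (β-1)) * min 1 (r x y)) ∂(q x)
          = M_W - (c/2 * w ^ (β-1)) * ∫ y, min 1 (r x y) ∂(q x) := by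
        rw [integral_sub (integrable_const _) ((hmin_int x).const_mul _),
          integral_const_mul, integral_const]
        simp
      have h3 : (c/2 * w ^ (β-1)) * α₀ ≤ (c/2 * w ^ (β-1)) * ∫ y, min 1 (r x y) ∂(q x) :=
        mul_le_mul_of_nonneg_left (hacc x) (by positivity)
      linarith
    -- (w^β+1)^p ≤ 2 w^(β−1)
    have hp1' : (β-1)/β ≤ 1 := (div_le_one hβ0).mpr (by linarith)
    have h2p : (2:ℝ) ^ ((β-1)/β) ≤ 2 := by
      calc (2:ℝ) ^ ((β-1)/β) ≤ (2:ℝ) ^ (1:ℝ) :=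
          Real.rpow_le_rpow_of_exponent_le one_le_two hp1'
        _ = 2 := Real.rpow_one 2
    have hp1 : (w ^ β + 1) ^ ((β-1)/β) ≤ 2 * w ^ (β-1) := by
      have h1 : (1:ℝ) ≤ w ^ β := Real.one_le_rpow hw1 hβ0.le
      have hwb0 : (0:ℝ) ≤ w ^ β := by linarith
      calc (w ^ β + 1) ^ ((β-1)/β) ≤ (2 * w ^ β) ^ ((β-1)/β) :=
          Real.rpow_le_rpow (by linarith) (by linarith) hp0
        _ = 2 ^ ((β-1)/β) * (w ^ β) ^ ((β-1)/β) := Real.mul_rpow (by norm_num) hwb0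
        _ = 2 ^ ((β-1)/β) * w ^ (β-1) := by
            rw [← Real.rpow_mul hw.le]
            congr 2
            field_simp
        _ ≤ 2 * w ^ (β-1) := mul_le_mul_of_nonneg_right h2p hwβ10
    have h2 : δ * (w ^ β + 1) ^ ((β-1)/β) ≤ (c * α₀ / 4) * w ^ (β-1) := by
      calc δ * (w ^ β + 1) ^ ((β-1)/β) ≤ δ * (2 * w ^ (β-1)) :=
          mul_le_mul_of_nonneg_left hp1 hδ0.le
        _ = (c * α₀ / 4) * w ^ (β-1) := by rw [hδ_def]; ring
    have h3 : 8 * M_W ≤ w ^ (β-1) * (c * α₀) := by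
      have hb0 : (0:ℝ) ≤ 8*M_W/(c*α₀) := by positivity
      have hbase : (8*M_W/(c*α₀)) ^ (1/(β-1)) ≤ w := le_trans hwbar_base hcase
      have h4 : 8*M_W/(c*α₀) ≤ w ^ (β-1) := by
        have h5 : 8*M_W/(c*α₀) = ((8*M_W/(c*α₀)) ^ (1/(β-1))) ^ (β-1) := by
          rw [← Real.rpow_mul hb0, one_div, inv_mul_cancel₀ hβ1.ne', Real.rpow_one]
        rw [h5]
        exact Real.rpow_le_rpow (Real.rpow_nonneg hb0 _) hbase hβ1.le
      calc 8 * M_W = (8*M_W/(c*α₀)) * (c*α₀) := by field_simp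
        _ ≤ w ^ (β-1) * (c*α₀) := mul_le_mul_of_nonneg_right h4 hca0.le
    -- conclude: ∫F ≤ −δ (w^β+1)^p
    have hfin : M_W - (c/2 * w ^ (β-1)) * α₀ ≤ -(δ * (w ^ β + 1) ^ ((β-1)/β)) := by
      nlinarith
    linarith
end
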